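/- Let V be a real inner product space of dimension 4n with an orthogonal complex structure J, and let W ⊆ V be a subspace of dimension 2m with m ≤ n. Then: (i) for every real number c with 0 ≤ c < 1, dim ker(T_W ∘ T_W + c²·id_W) = dim ker(T_{W⊥} ∘ T_{W⊥} + c²·id_{W⊥}); that is, W and its orthogonal complement W⊥ have the same Kähler angles in (0, π/2], with the same multiplicities. (ii) dim(W⊥ ∩ J(W⊥)) − dim(W ∩ J(W)) = 4n − 4m; that is, only the angle 0 (complex directions) may occur with different multiplicities in W and W⊥. -/

import Mathlib

/-!
Write `A = P_{W⊥} J|_W` and `B = P_W J|_{W⊥}`. Inserting `P_W + P_{W⊥} = 1` into `J² = -1` gives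
`T_W² + B A = -1` and `A T_W + T_{W⊥} A = 0`. So `A` maps `ker (T_W² + c²)` into
`ker (T_{W⊥}² + c²)`, injectively when `c² ≠ 1` since `B A = c² - 1` there; by symmetry the two
kernels have the same dimension. Since `J` is skew, `B = -A*`, so `A` and `B` have the same rank,
while `ker A = W ∩ J W` and `ker B = W⊥ ∩ J W⊥`; rank–nullity then gives
`dim (W⊥ ∩ J W⊥) - dim (W ∩ J W) = dim W⊥ - dim W`.
-/

open scoped RealInnerProductSpace

noncomputable section

variable {V : Type*} [NormedAddCommGroup V] [InnerProductSpace ℝ V] [FiniteDimensional ℝ V]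

/-- `T_U = P_U ∘ J` restricted to the subspace `U`, as a linear endomorphism of `U`. -/
noncomputable def TL (J : V →ₗ[ℝ] V) (U : Submodule ℝ V) : U →ₗ[ℝ] U :=
  U.orthogonalProjectionOnto.toLinearMap ∘ₗ J ∘ₗ U.subtype

theorem Submodule.map_eq_comap_of_apply_apply_eq_neg {R M : Type*} [Ring R] [AddCommGroup M]
    [Module R M] {J : M →ₗ[R] M} (hJsq : ∀ x : M, J (J x) = -x) (U : Submodule R M) :
    U.map J = U.comap J := by
  ext x
  refine ⟨?_, fun hx => ⟨-J x, U.neg_mem hx, by rw [map_neg, hJsq, neg_neg]⟩⟩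
  rintro ⟨y, hy, rfl⟩
  simpa [Submodule.mem_comap, hJsq] using hy

theorem inner_apply_eq_neg_inner_apply {E : Type*} [NormedAddCommGroup E] [InnerProductSpace ℝ E]
    {J : E →ₗ[ℝ] E} (hJorth : ∀ x y : E, ⟪J x, J y⟫ = ⟪x, y⟫) (hJsq : ∀ x : E, J (J x) = -x)
    (x y : E) : ⟪J x, y⟫ = -⟪x, J y⟫ := by
  rw [← hJorth, hJsq, inner_neg_left]

section Compression

open Submodule

def compression (J : V →ₗ[ℝ] V) (U₁ U₂ : Submodule ℝ V) : U₁ →ₗ[ℝ] U₂ :=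
  U₂.orthogonalProjectionOnto.toLinearMap ∘ₗ J ∘ₗ U₁.subtype

variable {J : V →ₗ[ℝ] V}

theorem compression_apply (U₁ U₂ : Submodule ℝ V) (x : U₁) :
    compression J U₁ U₂ x = U₂.orthogonalProjectionOnto (J x) := rfl

theorem compression_self (U : Submodule ℝ V) : compression J U U = TL J U := rfl

theorem compression_comp_add_compression_comp_orthogonal (hJsq : ∀ x : V, J (J x) = -x)
    (U₁ U₂ U₃ : Submodule ℝ V) (x : U₁) :
    compression J U₂ U₃ (compression J U₁ U₂ x) + compression J U₂ᗮ U₃ (compression J U₁ U₂ᗮ x) =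
      -U₃.orthogonalProjectionOnto x := by
  simp only [compression_apply, ← map_add, ← starProjection_apply,
    starProjection_add_starProjection_orthogonal, hJsq, map_neg]

theorem compression_orthogonal_comp_compression (hJsq : ∀ x : V, J (J x) = -x)
    (U : Submodule ℝ V) (x : U) :
    compression J Uᗮ U (compression J U Uᗮ x) = -x - TL J U (TL J U x) := by
  rw [eq_sub_iff_add_eq, add_comm, ← compression_self,
    compression_comp_add_compression_comp_orthogonal hJsq,
    orthogonalProjectionOnto_mem_subspace_eq_self]

theorem TL_orthogonal_comp_compression (hJsq : ∀ x : V, J (J x) = -x)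
    (U : Submodule ℝ V) (x : U) :
    TL J Uᗮ (compression J U Uᗮ x) = -compression J U Uᗮ (TL J U x) := by
  rw [eq_neg_iff_add_eq_zero, add_comm, ← compression_self, ← compression_self,
    compression_comp_add_compression_comp_orthogonal hJsq,
    orthogonalProjectionOnto_orthogonal_apply_eq_zero x.2, neg_zero]

theorem compression_mem_ker_TL_sq_add (hJsq : ∀ x : V, J (J x) = -x)
    {U : Submodule ℝ V} {c : ℝ} {x : U}
    (hx : x ∈ LinearMap.ker (TL J U ∘ₗ TL J U + c ^ 2 • LinearMap.id)) :
    compression J U Uᗮ x ∈ LinearMap.ker (TL J Uᗮ ∘ₗ TL J Uᗮ + c ^ 2 • LinearMap.id) := by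
  simp only [LinearMap.mem_ker, LinearMap.add_apply, LinearMap.comp_apply, LinearMap.smul_apply,
    LinearMap.id_apply] at hx ⊢
  rw [TL_orthogonal_comp_compression hJsq, map_neg, TL_orthogonal_comp_compression hJsq, neg_neg,
    ← map_smul, ← map_add, hx, map_zero]

theorem finrank_ker_TL_sq_add_le_orthogonal (hJsq : ∀ x : V, J (J x) = -x)
    (U : Submodule ℝ V) {c : ℝ} (hc : c ^ 2 ≠ 1) :
    Module.finrank ℝ (LinearMap.ker (TL J U ∘ₗ TL J U + c ^ 2 • LinearMap.id)) ≤
      Module.finrank ℝ (LinearMap.ker (TL J Uᗮ ∘ₗ TL J Uᗮ + c ^ 2 • LinearMap.id)) := by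
  refine LinearMap.finrank_le_finrank_of_injective
    (f := (compression J U Uᗮ).restrict fun _ => compression_mem_ker_TL_sq_add hJsq) ?_
  rw [injective_iff_map_eq_zero]
  rintro ⟨x, hx⟩ hfx
  have hAx : compression J U Uᗮ x = 0 := congrArg Subtype.val hfx
  have hTTx : TL J U (TL J U x) = -(c ^ 2 • x) := by
    simpa [add_eq_zero_iff_eq_neg] using hx
  have hx0 : (c ^ 2 - 1) • x = 0 := by
    have hBAx := compression_orthogonal_comp_compression hJsq U x
    rw [hAx, map_zero, hTTx] at hBAx
    rw [sub_smul, one_smul, hBAx]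
    abel
  simpa [sub_eq_zero, hc] using hx0

theorem finrank_ker_compression_of_orthogonal_eq (hJsq : ∀ x : V, J (J x) = -x)
    {U₁ U₂ : Submodule ℝ V} (h : U₂ᗮ = U₁) :
    Module.finrank ℝ (LinearMap.ker (compression J U₁ U₂)) = Module.finrank ℝ ↥(U₁ ⊓ U₁.map J) := by
  have hker : LinearMap.ker (compression J U₁ U₂) = (U₁ ⊓ U₁.map J).comap U₁.subtype := by
    ext x
    simp [compression_apply, h, map_eq_comap_of_apply_apply_eq_neg hJsq]
  rw [hker]
  exact (Submodule.comapSubtypeEquivOfLe inf_le_left).finrank_eq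

theorem adjoint_compression (hJorth : ∀ x y : V, ⟪J x, J y⟫ = ⟪x, y⟫)
    (hJsq : ∀ x : V, J (J x) = -x) (U₁ U₂ : Submodule ℝ V) :
    LinearMap.adjoint (compression J U₁ U₂) = -compression J U₂ U₁ := by
  refine ((LinearMap.eq_adjoint_iff _ _).mpr fun y x => ?_).symm
  simp [compression_apply, inner_apply_eq_neg_inner_apply hJorth hJsq]

theorem finrank_range_compression_comm (hJorth : ∀ x y : V, ⟪J x, J y⟫ = ⟪x, y⟫)
    (hJsq : ∀ x : V, J (J x) = -x) (U₁ U₂ : Submodule ℝ V) :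
    Module.finrank ℝ (LinearMap.range (compression J U₂ U₁)) =
      Module.finrank ℝ (LinearMap.range (compression J U₁ U₂)) := by
  rw [← LinearMap.finrank_range_adjoint, adjoint_compression hJorth hJsq, LinearMap.range_neg]

end Compression

theorem stmt_1 (n m : ℕ) (hnm : m ≤ n) (J : V →ₗ[ℝ] V)
    (hJorth : ∀ x y : V, ⟪J x, J y⟫ = ⟪x, y⟫)
    (hJsq : ∀ x : V, J (J x) = -x)
    (hV : Module.finrank ℝ V = 4 * n)
    (W : Submodule ℝ V) (hW : Module.finrank ℝ W = 2 * m) :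
    (∀ c : ℝ, 0 ≤ c → c < 1 →
      Module.finrank ℝ (LinearMap.ker (TL J W ∘ₗ TL J W + c ^ 2 • LinearMap.id)) =
      Module.finrank ℝ (LinearMap.ker (TL J Wᗮ ∘ₗ TL J Wᗮ + c ^ 2 • LinearMap.id))) ∧
    Module.finrank ℝ ↥(Wᗮ ⊓ Wᗮ.map J) =
      Module.finrank ℝ ↥(W ⊓ W.map J) + (4 * n - 4 * m) := by
  refine ⟨fun c hc₀ hc₁ => ?_, ?_⟩
  · have hc : c ^ 2 ≠ 1 := (pow_lt_one₀ hc₀ hc₁ two_ne_zero).ne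
    have hle := finrank_ker_TL_sq_add_le_orthogonal hJsq Wᗮ hc
    rw [W.orthogonal_orthogonal] at hle
    exact le_antisymm (finrank_ker_TL_sq_add_le_orthogonal hJsq W hc) hle
  · have hker := finrank_ker_compression_of_orthogonal_eq hJsq W.orthogonal_orthogonal
    have hker' := finrank_ker_compression_of_orthogonal_eq (U₁ := Wᗮ) (U₂ := W) hJsq rfl
    have hrank := finrank_range_compression_comm hJorth hJsq W Wᗮ
    have hA := (compression J W Wᗮ).finrank_range_add_finrank_ker
    have hB := (compression J Wᗮ W).finrank_range_add_finrank_ker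
    have hdim := W.finrank_add_finrank_orthogonal
    omega

end
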